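/- arXiv:math/0507336 — 2 statements merged into one kernel-verified Lean document; each statement's English description precedes it below -/
import Mathlib

section
/- Let c be the cyclic permutation of {1,...,2n} sending j to j-1 (and 1 to 2n). Then R(π) := {c(B) : B ∈ π} defines a permutation of NC'(2n), and for every π ∈ NC'(2n), the number of blocks of R(π) with odd minimum equals the number of blocks of π with even minimum plus 1. -/
open scoped Classical

/-- `π` is a partition of `{1,…,n}`. -/
def IsPartitionOn (n : ℕ) (π : Finset (Finset ℕ)) : Prop :=
  (∀ B ∈ π, B.Nonempty) ∧ (∀ B ∈ π, B ⊆ Finset.Icc 1 n) ∧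
    ∀ i ∈ Finset.Icc 1 n, ∃! B, B ∈ π ∧ i ∈ B

/-- `π` is noncrossing. -/
def IsNoncrossing (π : Finset (Finset ℕ)) : Prop :=
  ∀ B ∈ π, ∀ B' ∈ π, ∀ a ∈ B, ∀ c ∈ B, ∀ b ∈ B', ∀ d ∈ B',
    a < b → b < c → c < d → B = B'

/-- The minimum of a block (junk value `0` for the empty block). -/
def blockMin (B : Finset ℕ) : ℕ := WithTop.untopD 0 B.min

/-- `π ∈ NC'(n)`: noncrossing partition of `{1,…,n}` with all blocks of even
cardinality (`NC'(2n)` of the paper is `IsNCEven (2*n)`). -/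
def IsNCEven (n : ℕ) (π : Finset (Finset ℕ)) : Prop :=
  IsPartitionOn n π ∧ IsNoncrossing π ∧ ∀ B ∈ π, Even B.card

/-- `e(π)`: number of blocks of `π` with even minimum. -/
noncomputable def evenMinCount (π : Finset (Finset ℕ)) : ℕ :=
  (π.filter fun B => Even (blockMin B)).card

/-- `o(π)`: number of blocks of `π` with odd minimum. -/
noncomputable def oddMinCount (π : Finset (Finset ℕ)) : ℕ :=
  (π.filter fun B => ¬ Even (blockMin B)).card

/-- The cyclic permutation `c` of `{1,…,2n}` sending `j` to `j-1` and `1` to `2n`. -/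
def cyc (n j : ℕ) : ℕ := if j = 1 then 2 * n else j - 1

/-- `R(π) = {c(B) : B ∈ π}`. -/
def Rmap (n : ℕ) (π : Finset (Finset ℕ)) : Finset (Finset ℕ) :=
  π.image fun B => B.image (cyc n)

/-!
Rotating by `c` preserves block sizes and the noncrossing property, and it is injective on
partitions of `{1,…,2n}`; since `NC'(2n)` is finite, `R` permutes it. For the count: a block not
containing `1` has its minimum lowered by one, so its parity flips. The block `B` containing `1`
has odd minimum `1`; its image has minimum `s - 1`, where `s` is the next element of `B`, and
`s` is even because the points strictly between `1` and `s` form a union of blocks of `π`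
(noncrossing), each of even size.
-/

open Finset

section Partition

variable {N : ℕ} {π : Finset (Finset ℕ)}

theorem IsPartitionOn.eq_of_mem_of_mem (hπ : IsPartitionOn N π) {B B' : Finset ℕ} (hB : B ∈ π)
    (hB' : B' ∈ π) {i : ℕ} (hiB : i ∈ B) (hiB' : i ∈ B') : B = B' := by
  obtain ⟨_, _, hu⟩ := hπ.2.2 i (hπ.2.1 B hB hiB)
  exact (hu B ⟨hB, hiB⟩).trans (hu B' ⟨hB', hiB'⟩).symm

theorem IsPartitionOn.image_of_bijOn {f : ℕ → ℕ} (hf : Set.BijOn f (Icc 1 N) (Icc 1 N))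
    (hπ : IsPartitionOn N π) : IsPartitionOn N (π.image fun B => B.image f) := by
  obtain ⟨hne, hsub, hcover⟩ := hπ
  refine ⟨?_, ?_, ?_⟩
  · rintro _ hC
    obtain ⟨B, hB, rfl⟩ := mem_image.mp hC
    exact (hne B hB).image f
  · rintro _ hC _ hx
    obtain ⟨B, hB, rfl⟩ := mem_image.mp hC
    obtain ⟨y, hy, rfl⟩ := mem_image.mp hx
    exact hf.mapsTo (hsub B hB hy)
  · intro i hi
    obtain ⟨j, hj, rfl⟩ := hf.surjOn hi
    obtain ⟨B, ⟨hB, hjB⟩, hBu⟩ := hcover j hj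
    refine ⟨B.image f, ⟨mem_image_of_mem _ hB, mem_image_of_mem _ hjB⟩, ?_⟩
    rintro _ ⟨hC, hjC⟩
    obtain ⟨B', hB', rfl⟩ := mem_image.mp hC
    obtain ⟨x, hxB', hfx⟩ := mem_image.mp hjC
    rw [hf.injOn (hsub B' hB' hxB') hj hfx] at hxB'
    rw [hBu B' ⟨hB', hxB'⟩]

theorem IsPartitionOn.subset_powerset (hπ : IsPartitionOn N π) : π ⊆ (Icc 1 N).powerset :=
  fun B hB => mem_powerset.mpr (hπ.2.1 B hB)

theorem IsPartitionOn.even_card_of_saturated (hπ : IsPartitionOn N π)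
    (hev : ∀ B ∈ π, Even B.card) {T : Finset ℕ} (hT : T ⊆ Icc 1 N)
    (hsat : ∀ B ∈ π, ∀ x ∈ B, x ∈ T → B ⊆ T) : Even T.card := by
  have hunion : (π.filter (· ⊆ T)).biUnion id = T := by
    ext t
    simp only [mem_biUnion, mem_filter, id]
    refine ⟨fun ⟨B, ⟨_, hBT⟩, htB⟩ => hBT htB, fun ht => ?_⟩
    obtain ⟨B, ⟨hB, htB⟩, _⟩ := hπ.2.2 t (hT ht)
    exact ⟨B, ⟨hB, hsat B hB t htB ht⟩, htB⟩
  have hdisj : (π.filter (· ⊆ T) : Set (Finset ℕ)).PairwiseDisjoint id := by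
    intro B hB B' hB' hne
    replace hB := mem_filter.mp (mem_coe.mp hB)
    replace hB' := mem_filter.mp (mem_coe.mp hB')
    exact disjoint_left.mpr fun _ hi hi' => hne (hπ.eq_of_mem_of_mem hB.1 hB'.1 hi hi')
  rw [← hunion, card_biUnion hdisj]
  exact even_sum _ fun B hB => hev B (mem_filter.mp hB).1

theorem IsNoncrossing.subset_Ioo (hπ : IsPartitionOn N π) (hnc : IsNoncrossing π)
    {B : Finset ℕ} (hB : B ∈ π) {a b : ℕ} (ha : a ∈ B) (hb : b ∈ B)
    (hgap : ∀ x ∈ B, x ≤ a ∨ b ≤ x) {B' : Finset ℕ} (hB' : B' ∈ π) {x : ℕ} (hx : x ∈ B')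
    (hxab : x ∈ Ioo a b) : B' ⊆ Ioo a b := by
  rw [mem_Ioo] at hxab
  have hBB' : B ≠ B' := by
    rintro rfl
    have := hgap x hx
    omega
  intro y hy
  rw [mem_Ioo]
  by_contra hy'
  rcases lt_trichotomy y a with hya | rfl | hay
  · exact hBB' (hnc B' hB' B hB y hy x hx a ha b hb hya hxab.1 hxab.2).symm
  · exact hBB' (hπ.eq_of_mem_of_mem hB hB' ha hy)
  rcases lt_trichotomy y b with hyb | rfl | hby
  · omega
  · exact hBB' (hπ.eq_of_mem_of_mem hB hB' hb hy)
  · exact hBB' (hnc B hB B' hB' a ha b hb x hx y hy hxab.1 hxab.2 hby)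

theorem IsNCEven.even_card_Ioo (hπ : IsNCEven N π) {B : Finset ℕ} (hB : B ∈ π) {a b : ℕ}
    (ha : a ∈ B) (hb : b ∈ B) (hgap : ∀ x ∈ B, x ≤ a ∨ b ≤ x) : Even (Ioo a b).card := by
  obtain ⟨hpart, hnc, hev⟩ := hπ
  refine hpart.even_card_of_saturated hev (fun x hx => ?_)
    fun B' hB' x hx hxab => hnc.subset_Ioo hpart hB ha hb hgap hB' hx hxab
  have := mem_Icc.mp (hpart.2.1 B hB hb)
  rw [mem_Ioo] at hx
  exact mem_Icc.mpr ⟨by omega, by omega⟩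

theorem finite_setOf_isNCEven : {π | IsNCEven N π}.Finite :=
  ((Icc 1 N).powerset.powerset : Set (Finset (Finset ℕ))).toFinite.subset
    fun _ hπ => mem_powerset.mpr hπ.1.subset_powerset

end Partition

section Rotation

variable {n : ℕ}

theorem cyc_of_ne_one {j : ℕ} (h : j ≠ 1) : cyc n j = j - 1 := if_neg h

theorem cyc_bijOn (n : ℕ) : Set.BijOn (cyc n) (Icc 1 (2 * n)) (Icc 1 (2 * n)) := by
  refine ⟨fun j hj => ?_, fun i hi j hj hij => ?_, fun i hi => ?_⟩
  · simp only [coe_Icc, Set.mem_Icc, cyc] at hj ⊢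
    split_ifs <;> omega
  · simp only [coe_Icc, Set.mem_Icc, cyc] at hi hj hij
    split_ifs at hij <;> omega
  · refine ⟨if i = 2 * n then 1 else i + 1, ?_, ?_⟩ <;>
      simp only [coe_Icc, Set.mem_Icc, cyc] at hi ⊢ <;> split_ifs <;> omega

theorem ne_one_of_cyc_lt_cyc {x y : ℕ} (hy : y ∈ Icc 1 (2 * n)) (h : cyc n x < cyc n y) :
    x ≠ 1 := by
  rw [mem_Icc] at hy
  unfold cyc at h
  split_ifs at h <;> omega

theorem eq_one_or_lt_of_cyc_lt_cyc {x y : ℕ} (h : cyc n x < cyc n y) : y = 1 ∨ x < y := by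
  unfold cyc at h
  split_ifs at h <;> omega

theorem isNoncrossing_Rmap {π : Finset (Finset ℕ)} (hsub : ∀ B ∈ π, B ⊆ Icc 1 (2 * n))
    (hnc : IsNoncrossing π) : IsNoncrossing (Rmap n π) := by
  rintro _ hC _ hC' _ haC _ hcC _ hbC _ hdC hab hbc hcd
  obtain ⟨B, hB, rfl⟩ := mem_image.mp hC
  obtain ⟨B', hB', rfl⟩ := mem_image.mp hC'
  obtain ⟨a, ha, rfl⟩ := mem_image.mp haC
  obtain ⟨c, hc, rfl⟩ := mem_image.mp hcC
  obtain ⟨b, hb, rfl⟩ := mem_image.mp hbC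
  obtain ⟨d, hd, rfl⟩ := mem_image.mp hdC
  have ha1 := ne_one_of_cyc_lt_cyc (hsub B' hB' hb) hab
  have hb1 := ne_one_of_cyc_lt_cyc (hsub B hB hc) hbc
  have hc1 := ne_one_of_cyc_lt_cyc (hsub B' hB' hd) hcd
  have hIa := mem_Icc.mp (hsub B hB ha)
  have hab' := eq_one_or_lt_of_cyc_lt_cyc hab
  have hbc' := eq_one_or_lt_of_cyc_lt_cyc hbc
  congr 1
  rcases eq_one_or_lt_of_cyc_lt_cyc hcd with rfl | hcd'
  -- `c` sends `1` to the top, so a crossing ending at `c 1` comes from one starting at `1`.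
  · exact (hnc B' hB' B hB 1 hd b hb a ha c hc (by omega) (by omega) (by omega)).symm
  · exact hnc B hB B' hB' a ha c hc b hb d hd (by omega) (by omega) hcd'

theorem isNCEven_Rmap {π : Finset (Finset ℕ)} (hπ : IsNCEven (2 * n) π) :
    IsNCEven (2 * n) (Rmap n π) := by
  obtain ⟨hpart, hnc, hev⟩ := hπ
  refine ⟨hpart.image_of_bijOn (cyc_bijOn n), isNoncrossing_Rmap hpart.2.1 hnc, fun _ hC => ?_⟩
  obtain ⟨B, hB, rfl⟩ := mem_image.mp hC
  rw [card_image_of_injOn ((cyc_bijOn n).injOn.mono (by exact_mod_cast hpart.2.1 B hB))]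
  exact hev B hB

theorem image_cyc_injOn :
    Set.InjOn (fun B : Finset ℕ => B.image (cyc n)) (Icc 1 (2 * n)).powerset :=
  image_injOn_powerset_of_injOn (cyc_bijOn n).injOn

theorem Rmap_injOn : Set.InjOn (Rmap n) (Icc 1 (2 * n)).powerset.powerset :=
  image_injOn_powerset_of_injOn image_cyc_injOn

end Rotation

section MinimumParity

theorem blockMin_eq_min' {B : Finset ℕ} (h : B.Nonempty) : blockMin B = B.min' h := by
  rw [blockMin, ← coe_min' h, WithTop.untopD_coe]

theorem blockMin_mem {B : Finset ℕ} (h : B.Nonempty) : blockMin B ∈ B := by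
  rw [blockMin_eq_min' h]
  exact min'_mem _ _

theorem blockMin_le {B : Finset ℕ} {x : ℕ} (hx : x ∈ B) : blockMin B ≤ x := by
  rw [blockMin_eq_min' ⟨x, hx⟩]
  exact min'_le _ _ hx

theorem blockMin_eq_of_mem_of_forall_le {B : Finset ℕ} {m : ℕ} (hm : m ∈ B)
    (h : ∀ x ∈ B, m ≤ x) : blockMin B = m :=
  le_antisymm (blockMin_le hm) (h _ (blockMin_mem ⟨m, hm⟩))

variable {N n : ℕ} {B : Finset ℕ}

theorem IsPartitionOn.blockMin_mem_Icc {π : Finset (Finset ℕ)} (hπ : IsPartitionOn N π)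
    (hB : B ∈ π) : blockMin B ∈ Icc 1 N :=
  hπ.2.1 B hB (blockMin_mem (hπ.1 B hB))

theorem IsPartitionOn.blockMin_eq_one_iff {π : Finset (Finset ℕ)} (hπ : IsPartitionOn N π)
    (hB : B ∈ π) : blockMin B = 1 ↔ 1 ∈ B := by
  have := mem_Icc.mp (hπ.blockMin_mem_Icc hB)
  exact ⟨fun h => h ▸ blockMin_mem (hπ.1 B hB), fun h1 => by have := blockMin_le h1; omega⟩

theorem blockMin_image_cyc_of_one_notMem (hB : B.Nonempty) (h1 : 1 ∉ B) :
    blockMin (B.image (cyc n)) = blockMin B - 1 := by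
  have hne : ∀ x ∈ B, x ≠ 1 := fun x hx h => h1 (h ▸ hx)
  refine blockMin_eq_of_mem_of_forall_le ?_ fun y hy => ?_
  · rw [← cyc_of_ne_one (hne _ (blockMin_mem hB))]
    exact mem_image_of_mem _ (blockMin_mem hB)
  · obtain ⟨x, hx, rfl⟩ := mem_image.mp hy
    rw [cyc_of_ne_one (hne x hx)]
    exact Nat.sub_le_sub_right (blockMin_le hx) 1

theorem not_even_blockMin_image_cyc_of_one_mem {π : Finset (Finset ℕ)}
    (hπ : IsNCEven (2 * n) π) (hB : B ∈ π) (h1 : 1 ∈ B) :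
    ¬Even (blockMin (B.image (cyc n))) := by
  have hsub := hπ.1.2.1 B hB
  obtain ⟨y, hy, hy1⟩ : ∃ y ∈ B, y ≠ 1 := by
    refine exists_mem_ne ?_ 1
    obtain ⟨k, hk⟩ := hπ.2.2 B hB
    have := card_pos.mpr ⟨1, h1⟩
    omega
  have hne : B.Nonempty := ⟨1, h1⟩
  obtain ⟨x, hx, hxm⟩ := mem_image.mp (blockMin_mem (hne.image (cyc n)))
  have hmin : ∀ z ∈ B, cyc n x ≤ cyc n z := fun z hz => hxm ▸ blockMin_le (mem_image_of_mem _ hz)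
  have hIx := mem_Icc.mp (hsub hx)
  have hIy := mem_Icc.mp (hsub hy)
  have hx1 : x ≠ 1 := by
    rintro rfl
    have := hmin y hy
    simp only [cyc, if_pos, if_neg hy1] at this
    omega
  have hgap : ∀ z ∈ B, z ≤ 1 ∨ x ≤ z := by
    intro z hz
    have hxz := hmin z hz
    have := mem_Icc.mp (hsub hz)
    unfold cyc at hxz
    split_ifs at hxz <;> omega
  have hxeven := hπ.even_card_Ioo hB h1 hx hgap
  rw [Nat.card_Ioo] at hxeven
  rw [← hxm, cyc_of_ne_one hx1]
  obtain ⟨k, hk⟩ := hxeven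
  rintro ⟨j, hj⟩
  omega

end MinimumParity

section Count

variable {n : ℕ} {π : Finset (Finset ℕ)}

theorem IsNCEven.not_even_blockMin_image_cyc_iff (hπ : IsNCEven (2 * n) π) {B : Finset ℕ}
    (hB : B ∈ π) : ¬Even (blockMin (B.image (cyc n))) ↔ 1 ∈ B ∨ Even (blockMin B) := by
  by_cases h1 : 1 ∈ B
  · exact iff_of_true (not_even_blockMin_image_cyc_of_one_mem hπ hB h1) (Or.inl h1)
  · have hpos := (mem_Icc.mp (hπ.1.blockMin_mem_Icc hB)).1
    rw [blockMin_image_cyc_of_one_notMem (hπ.1.1 B hB) h1, or_iff_right h1, Nat.even_sub' hpos]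
    simp

theorem IsNCEven.oddMinCount_Rmap (hn : 0 < n) (hπ : IsNCEven (2 * n) π) :
    oddMinCount (Rmap n π) = evenMinCount π + 1 := by
  obtain ⟨B₁, ⟨hB₁, h1B₁⟩, hB₁u⟩ := hπ.1.2.2 1 (mem_Icc.mpr ⟨le_rfl, by omega⟩)
  have hone : π.filter (1 ∈ ·) = {B₁} :=
    eq_singleton_iff_unique_mem.mpr ⟨mem_filter.mpr ⟨hB₁, h1B₁⟩,
      fun B hB => hB₁u B (mem_filter.mp hB)⟩
  have hdisj : Disjoint (π.filter (1 ∈ ·)) (π.filter fun B => Even (blockMin B)) := by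
    rw [hone, disjoint_singleton_left, mem_filter, (hπ.1.blockMin_eq_one_iff hB₁).mpr h1B₁]
    simp
  calc oddMinCount (Rmap n π)
      = (π.filter fun B => ¬Even (blockMin (B.image (cyc n)))).card := by
        rw [oddMinCount, Rmap, filter_image, card_image_of_injOn]
        exact image_cyc_injOn.mono fun B hB => by
          exact_mod_cast hπ.1.subset_powerset (mem_filter.mp hB).1
    _ = (π.filter (1 ∈ ·) ∪ π.filter fun B => Even (blockMin B)).card := by
        rw [← filter_or]
        exact congrArg card (filter_congr fun B hB => hπ.not_even_blockMin_image_cyc_iff hB)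
    _ = evenMinCount π + 1 := by
        rw [card_union_of_disjoint hdisj, hone, card_singleton, add_comm, evenMinCount]

end Count

/-- `R` defines a permutation of `NC'(2n)`, and for every
`π ∈ NC'(2n)`, `o(R(π)) = e(π) + 1`. -/
theorem Rmap_bijOn_and_oddMin (n : ℕ) (hn : 0 < n) :
    Set.BijOn (Rmap n) {π | IsNCEven (2 * n) π} {π | IsNCEven (2 * n) π} ∧
      ∀ π, IsNCEven (2 * n) π → oddMinCount (Rmap n π) = evenMinCount π + 1 := by
  have hmaps : Set.MapsTo (Rmap n) {π | IsNCEven (2 * n) π} {π | IsNCEven (2 * n) π} :=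
    fun _ hπ => isNCEven_Rmap hπ
  have hinj : Set.InjOn (Rmap n) {π | IsNCEven (2 * n) π} :=
    Rmap_injOn.mono fun _ hπ => mem_powerset.mpr hπ.1.subset_powerset
  exact ⟨(finite_setOf_isNCEven.injOn_iff_bijOn_of_mapsTo hmaps).mp hinj,
    fun _ hπ => hπ.oddMinCount_Rmap hn⟩
end

section
/- Let M and C be formal power series with zero constant term satisfying C ∘ (X·(T∘M)) = M, where T(X) = (λX+1)(X+1) and λ ∈ (0,1]. Then C = U((X / (X·(T∘M))^{<-1>}) - 1), where U = (T-1)^{<-1>}. -/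
/-!
Write `S = X·(T∘M)`. Composing `W·V = X` on the right with `S` and using `V∘S = X` gives
`(W∘S)·X = S`, so `W∘S = T∘M`. Hence `(U∘(W - 1))∘S = U∘((T - 1)∘M) = M = C∘S`, and `S` can be
cancelled on the right since it has the compositional inverse `V`.
Composition with a series of zero constant term agrees with `PowerSeries.subst`, which supplies
the algebra of composition.
-/

/-- Composition `f ∘ g` of formal power series (intended for `g` with zero
constant term, in which case this is the usual composition). -/
noncomputable def pscomp (f g : PowerSeries ℂ) : PowerSeries ℂ :=
  PowerSeries.mk fun n =>
    ∑ k ∈ Finset.range (n + 1), PowerSeries.coeff k f * PowerSeries.coeff n (g ^ k)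

open PowerSeries

section

variable {f g h : PowerSeries ℂ}

theorem pscomp_eq_subst (hg : constantCoeff g = 0) : pscomp f g = f.subst g := by
  ext n
  rw [coeff_subst' (.of_constantCoeff_zero' hg),
    finsum_eq_sum_of_support_subset (s := Finset.range (n + 1)) _ fun k hk => ?_]
  · simp [pscomp, smul_eq_mul]
  · by_contra hkn
    refine hk (show coeff k f • coeff n (g ^ k) = 0 from ?_)
    rw [smul_eq_mul, coeff_of_lt_order n ?_, mul_zero]
    exact (Nat.cast_lt.mpr (by simpa using hkn)).trans_le
      (le_order_pow_of_constantCoeff_eq_zero k hg)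

theorem constantCoeff_pscomp (f g : PowerSeries ℂ) :
    constantCoeff (pscomp f g) = constantCoeff f := by
  rw [← coeff_zero_eq_constantCoeff_apply, ← coeff_zero_eq_constantCoeff_apply]
  simp [pscomp]

theorem pscomp_X_left (hg : constantCoeff g = 0) : pscomp X g = g := by
  rw [pscomp_eq_subst hg, subst_X (.of_constantCoeff_zero' hg)]

theorem pscomp_X_right (f : PowerSeries ℂ) : pscomp f X = f := by
  rw [pscomp_eq_subst constantCoeff_X, X_subst]

theorem pscomp_mul (hg : constantCoeff g = 0) (f f' : PowerSeries ℂ) :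
    pscomp (f * f') g = pscomp f g * pscomp f' g := by
  simp only [pscomp_eq_subst hg, subst_mul (.of_constantCoeff_zero' hg)]

theorem pscomp_sub_one (hg : constantCoeff g = 0) (f : PowerSeries ℂ) :
    pscomp (f - 1) g = pscomp f g - 1 := by
  simp only [pscomp_eq_subst hg, ← coe_substAlgHom (.of_constantCoeff_zero' hg), map_sub,
    map_one]

theorem pscomp_assoc (hg : constantCoeff g = 0) (hh : constantCoeff h = 0)
    (f : PowerSeries ℂ) : pscomp (pscomp f g) h = pscomp f (pscomp g h) := by
  have hgh : constantCoeff (pscomp g h) = 0 := by rw [constantCoeff_pscomp, hg]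
  rw [pscomp_eq_subst hh, pscomp_eq_subst hg, pscomp_eq_subst hgh, pscomp_eq_subst hh,
    subst_comp_subst_apply (.of_constantCoeff_zero' hg) (.of_constantCoeff_zero' hh)]

theorem pscomp_left_injective (hg : constantCoeff g = 0) (hh : constantCoeff h = 0)
    (hgh : pscomp g h = X) : Function.Injective (pscomp · g) :=
  fun f f' (hff' : pscomp f g = pscomp f' g) => by
    rw [← pscomp_X_right f, ← pscomp_X_right f', ← hgh, ← pscomp_assoc hg hh,
      ← pscomp_assoc hg hh, hff']

theorem pscomp_X_mul_of_mul_eq_X {G V W : PowerSeries ℂ} (hW : W * V = X)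
    (hV : pscomp V (X * G) = X) : pscomp W (X * G) = G := by
  have hXG : constantCoeff (X * G) = 0 := by simp
  have h := pscomp_mul hXG W V
  rw [hW, pscomp_X_left hXG, hV] at h
  exact mul_right_cancel₀ X_ne_zero (h.symm.trans (mul_comm X G))

end

theorem rectangular_R_transform_formula_general (l : ℝ)
    (M C V W U : PowerSeries ℂ)
    (hM0 : PowerSeries.constantCoeff M = 0)
    -- `S := X·(T∘M)` where `T∘M = (λM+1)(M+1)`
    (hC : pscomp C (PowerSeries.X * (((l : ℂ) • M + 1) * (M + 1))) = M)
    -- `V = S^{<-1>}`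
    (hV0 : PowerSeries.constantCoeff V = 0)
    (hV1 : pscomp (PowerSeries.X * (((l : ℂ) • M + 1) * (M + 1))) V = PowerSeries.X)
    (hV2 : pscomp V (PowerSeries.X * (((l : ℂ) • M + 1) * (M + 1))) = PowerSeries.X)
    -- `W = X / V` in the field of fractions of `ℂ[[X]]`
    (hW : W * V = PowerSeries.X)
    -- `U = (T-1)^{<-1>}`, where `T(X) - 1 = λX² + (λ+1)X`
    (hU1 : pscomp U ((l : ℂ) • PowerSeries.X ^ 2 + ((l : ℂ) + 1) • PowerSeries.X) =
      PowerSeries.X) :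
    C = pscomp U (W - 1) := by
  set G := ((l : ℂ) • M + 1) * (M + 1)
  have hS0 : constantCoeff (X * G) = 0 := by simp
  have hG0 : constantCoeff G = 1 := by simp [G, hM0, smul_eq_C_mul]
  have hWS : pscomp W (X * G) = G := pscomp_X_mul_of_mul_eq_X hW hV2
  have hW0 : constantCoeff (W - 1) = 0 := by
    rw [map_sub, ← constantCoeff_pscomp W (X * G), hWS, hG0, map_one, sub_self]
  have hT : pscomp ((l : ℂ) • X ^ 2 + ((l : ℂ) + 1) • X) M = G - 1 := by
    have hM := HasSubst.of_constantCoeff_zero' hM0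
    rw [pscomp_eq_subst hM0, subst_add hM, subst_smul hM, subst_smul hM, subst_pow hM,
      subst_X hM]
    simp only [G, smul_eq_C_mul, map_add, map_one]
    ring
  have hT0 : constantCoeff ((l : ℂ) • X ^ 2 + ((l : ℂ) + 1) • X : PowerSeries ℂ) = 0 := by
    simp [smul_eq_C_mul]
  apply pscomp_left_injective hS0 hV0 hV1
  calc pscomp C (X * G) = M := hC
    _ = pscomp (pscomp U ((l : ℂ) • X ^ 2 + ((l : ℂ) + 1) • X)) M := by
      rw [hU1, pscomp_X_left hM0]
    _ = pscomp U (pscomp (W - 1) (X * G)) := by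
      rw [pscomp_assoc hT0 hM0, hT, pscomp_sub_one hS0, hWS]
    _ = pscomp (pscomp U (W - 1)) (X * G) := (pscomp_assoc hW0 hS0 U).symm

/-- let `M`, `C` be power series with zero constant term such that
`C ∘ (X·(T∘M)) = M`, where `T(X) = (λX+1)(X+1)` and `λ ∈ (0,1]`.  Let `V` be the
compositional inverse `(X·(T∘M))^{<-1>}`, let `W = X / V` (i.e. `W·V = X`), and
let `U = (T-1)^{<-1>}`.  Then `C = U((X / (X·(T∘M))^{<-1>}) - 1) = U ∘ (W - 1)`. -/
theorem rectangular_R_transform_formula (l : ℝ) (hl : l ∈ Set.Ioc (0 : ℝ) 1)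
    (M C V W U : PowerSeries ℂ)
    (hM0 : PowerSeries.constantCoeff M = 0)
    (hC0 : PowerSeries.constantCoeff C = 0)
    -- `S := X·(T∘M)` where `T∘M = (λM+1)(M+1)`
    (hC : pscomp C (PowerSeries.X * (((l : ℂ) • M + 1) * (M + 1))) = M)
    -- `V = S^{<-1>}`
    (hV0 : PowerSeries.constantCoeff V = 0)
    (hV1 : pscomp (PowerSeries.X * (((l : ℂ) • M + 1) * (M + 1))) V = PowerSeries.X)
    (hV2 : pscomp V (PowerSeries.X * (((l : ℂ) • M + 1) * (M + 1))) = PowerSeries.X)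
    -- `W = X / V` in the field of fractions of `ℂ[[X]]`
    (hW : W * V = PowerSeries.X)
    -- `U = (T-1)^{<-1>}`, where `T(X) - 1 = λX² + (λ+1)X`
    (hU0 : PowerSeries.constantCoeff U = 0)
    (hU1 : pscomp U ((l : ℂ) • PowerSeries.X ^ 2 + ((l : ℂ) + 1) • PowerSeries.X) =
      PowerSeries.X)
    (hU2 : pscomp ((l : ℂ) • PowerSeries.X ^ 2 + ((l : ℂ) + 1) • PowerSeries.X) U =
      PowerSeries.X) :
    C = pscomp U (W - 1) :=
  rectangular_R_transform_formula_general l M C V W U hM0 hC hV0 hV1 hV2 hW hU1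
end
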